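/- Let Q ⊂ ℝ^N be a cube, f ∈ L¹(Q; ℝ^d), and let g : Q → ℝ^d be measurable with g(x) ∈ ⟨⟨f⟩⟩_Q for a.e. x ∈ Q. Then there exists a measurable function K : Q×Q → ℝ with ‖K‖_∞ ≤ |Q|⁻¹ such that g(x) = ∫_Q K(x,y) f(y) dy for a.e. x ∈ Q. -/

import Mathlib

open MeasureTheory Set Matrix
open scoped ENNReal BigOperators NNReal

noncomputable section

namespace CBD

/-- The Euclidean norm of a vector in `ℝ^n` given as a plain function. -/
def vnorm {n : ℕ} (v : Fin n → ℝ) : ℝ := Real.sqrt (∑ i, v i ^ 2)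

/-- An axis-parallel half-open cube in `ℝ^N`. -/
structure Cube (N : ℕ) where
  corner : Fin N → ℝ
  side : ℝ
  side_pos : 0 < side

namespace Cube

variable {N : ℕ}

/-- The subset of `ℝ^N` determined by the cube. -/
def set (Q : Cube N) : Set (Fin N → ℝ) :=
  {x | ∀ i, Q.corner i ≤ x i ∧ x i < Q.corner i + Q.side}

/-- The volume `|Q|` of the cube. -/
def vol (Q : Cube N) : ℝ := Q.side ^ N

/-- The concentric dilation `rQ` (intended for `r ≥ 1`; implemented with `max r 1`). -/
def dilate (Q : Cube N) (r : ℝ) : Cube N where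
  corner := fun i => Q.corner i + Q.side / 2 - max r 1 * Q.side / 2
  side := max r 1 * Q.side
  side_pos := mul_pos (lt_of_lt_of_le one_pos (le_max_right r 1)) Q.side_pos

/-- `Q` belongs to the standard dyadic lattice `D`:
`Q = 2^{-k}([0,1)^N + m)` for some `k ∈ ℤ`, `m ∈ ℤ^N`. -/
def IsDyadic (Q : Cube N) : Prop :=
  ∃ (k : ℤ) (m : Fin N → ℤ), Q.side = (2:ℝ) ^ (-k) ∧ ∀ i, Q.corner i = (2:ℝ) ^ (-k) * (m i : ℝ)

/-- The subcube of `Q` of dyadic generation `k` in position `m`. -/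
def subCube (Q : Cube N) (k : ℕ) (m : Fin N → ℕ) : Cube N where
  corner := fun i => Q.corner i + Q.side * (m i : ℝ) / 2 ^ k
  side := Q.side / 2 ^ k
  side_pos := div_pos Q.side_pos (by positivity)

/-- `R` is a dyadic subcube of `Q` (relative dyadic lattice `D(Q)`, including `Q` itself). -/
def IsDyadicSub (Q R : Cube N) : Prop :=
  ∃ (k : ℕ) (m : Fin N → ℕ), (∀ i, m i < 2 ^ k) ∧ R = Q.subCube k m

end Cube

variable {N d : ℕ}

/-- The dyadic lattice, as a set of cubes. -/
def dyadicCubes (N : ℕ) : Set (Cube N) := {Q | Q.IsDyadic}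

/-- All cubes in `ℝ^N`. -/
def allCubes (N : ℕ) : Set (Cube N) := Set.univ

/-- The average `⟨g⟩_Q = |Q|⁻¹ ∫_Q g`. -/
def avg (Q : Cube N) (g : (Fin N → ℝ) → ℝ) : ℝ :=
  (Q.vol)⁻¹ * ∫ y in Q.set, g y

/-- The entrywise average `⟨W⟩_Q` of a matrix-valued function. -/
def matAvg (Q : Cube N) (W : (Fin N → ℝ) → Matrix (Fin d) (Fin d) ℝ) :
    Matrix (Fin d) (Fin d) ℝ :=
  Matrix.of fun i j => avg Q fun x => W x i j

/-- The positive semidefinite square root of a matrix (junk value `0` off psd matrices). -/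
def msqrt (A : Matrix (Fin d) (Fin d) ℝ) : Matrix (Fin d) (Fin d) ℝ :=
  letI := Classical.dec A.PosSemidef
  if h : A.PosSemidef then
    (h.1.eigenvectorUnitary : Matrix (Fin d) (Fin d) ℝ) *
      Matrix.diagonal ((RCLike.ofReal : ℝ → ℝ) ∘ Real.sqrt ∘ h.1.eigenvalues) *
      (star h.1.eigenvectorUnitary : Matrix (Fin d) (Fin d) ℝ)
  else 0

/-- The `ℓ² → ℓ²` operator norm of a `d × d` matrix. -/
def matOpNorm (A : Matrix (Fin d) (Fin d) ℝ) : ℝ :=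
  sSup {t | ∃ v : Fin d → ℝ, vnorm v ≤ 1 ∧ t = vnorm (A.mulVec v)}

/-- A `d`-dimensional matrix weight: locally integrable, positive semidefinite values. -/
def IsMatrixWeight (W : (Fin N → ℝ) → Matrix (Fin d) (Fin d) ℝ) : Prop :=
  (∀ x, (W x).PosSemidef) ∧ ∀ i j, LocallyIntegrable (fun x => W x i j) volume

/-- A scalar weight: nonnegative and locally integrable. -/
def IsScalarWeight (w : (Fin N → ℝ) → ℝ) : Prop :=
  (∀ x, 0 ≤ w x) ∧ LocallyIntegrable w volume

/-- The maximal function adapted to the cube `Q`: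
`M_Q w(x) = sup {⟨w⟩_R : R ∈ D(Q), x ∈ R}` (and `0` off `Q`). -/
def MQ (Q : Cube N) (w : (Fin N → ℝ) → ℝ) (x : Fin N → ℝ) : ℝ :=
  sSup ({0} ∪ {t | ∃ R : Cube N, Q.IsDyadicSub R ∧ x ∈ R.set ∧ t = avg R w})

/-- Admissible `A∞` constants of a scalar weight, over a collection `𝒬` of cubes. -/
def AinftyOn (𝒬 : Set (Cube N)) (w : (Fin N → ℝ) → ℝ) : Set ℝ :=
  {C | 0 ≤ C ∧ ∀ Q ∈ 𝒬, avg Q (MQ Q w) ≤ C * avg Q w}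

/-- The `A∞` characteristic (best admissible constant) of a scalar weight. -/
def AinftyChar (𝒬 : Set (Cube N)) (w : (Fin N → ℝ) → ℝ) : ℝ := sInf (AinftyOn 𝒬 w)

/-- The scalar weight `w_e(x) = (W(x)e, e)` associated to a matrix weight and `e ∈ ℝ^d`. -/
def we (W : (Fin N → ℝ) → Matrix (Fin d) (Fin d) ℝ) (e : Fin d → ℝ) :
    (Fin N → ℝ) → ℝ := fun x => e ⬝ᵥ (W x).mulVec e

/-- Admissible constants for the scalar `A∞` characteristic of a matrix weight. -/
def matAinftyScOn (𝒬 : Set (Cube N)) (W : (Fin N → ℝ) → Matrix (Fin d) (Fin d) ℝ) : Set ℝ :=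
  {C | 0 ≤ C ∧ ∀ e : Fin d → ℝ, ∀ Q ∈ 𝒬, avg Q (MQ Q (we W e)) ≤ C * avg Q (we W e)}

/-- The scalar `A∞` characteristic `[W]^{sc}_{A∞} = sup_e [w_e]_{A∞}` of a matrix weight. -/
def matAinftyScChar (𝒬 : Set (Cube N)) (W : (Fin N → ℝ) → Matrix (Fin d) (Fin d) ℝ) : ℝ :=
  sInf (matAinftyScOn 𝒬 W)

/-- Admissible constants for the two-weight matrix `A₂` characteristic
`[W,V]_{A₂} = sup_Q ‖⟨W⟩_Q^{1/2} ⟨V⟩_Q^{1/2}‖²`. -/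
def A2pairOn (𝒬 : Set (Cube N)) (W V : (Fin N → ℝ) → Matrix (Fin d) (Fin d) ℝ) : Set ℝ :=
  {C | ∀ Q ∈ 𝒬, matOpNorm (msqrt (matAvg Q W) * msqrt (matAvg Q V)) ^ 2 ≤ C}

/-- The two-weight matrix `A₂` characteristic. -/
def A2pairChar (𝒬 : Set (Cube N)) (W V : (Fin N → ℝ) → Matrix (Fin d) (Fin d) ℝ) : ℝ :=
  sInf (A2pairOn 𝒬 W V)

/-- Admissible constants for the scalar `A₂` characteristic `sup_Q ⟨w⟩_Q ⟨w⁻¹⟩_Q`. -/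
def scalarA2On (𝒬 : Set (Cube N)) (w : (Fin N → ℝ) → ℝ) : Set ℝ :=
  {C | ∀ Q ∈ 𝒬, avg Q w * avg Q (fun x => (w x)⁻¹) ≤ C}

/-- The scalar `A₂` characteristic. -/
def scalarA2Char (𝒬 : Set (Cube N)) (w : (Fin N → ℝ) → ℝ) : ℝ := sInf (scalarA2On 𝒬 w)

/-- An `ω`-Calderón–Zygmund operator on `ℝ^N`: a linear operator, bounded on `L²`,
with a kernel representation off the support, whose kernel satisfies the standard size
condition and the `ω`-smoothness condition, `ω` being a modulus of continuity. -/
structure CZO (N : ℕ) where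
  op : ((Fin N → ℝ) → ℝ) →ₗ[ℝ] ((Fin N → ℝ) → ℝ)
  K : (Fin N → ℝ) → (Fin N → ℝ) → ℝ
  ω : ℝ → ℝ
  CK : ℝ
  normBound : ℝ
  bounded : ∀ f : (Fin N → ℝ) → ℝ, MemLp f 2 volume →
    MemLp (op f) 2 volume ∧
      eLpNorm (op f) 2 volume ≤ ENNReal.ofReal normBound * eLpNorm f 2 volume
  repr : ∀ f : (Fin N → ℝ) → ℝ, MemLp f 2 volume → ∀ x ∉ tsupport f,
    op f x = ∫ y, K x y * f y
  size : ∀ x y : Fin N → ℝ, x ≠ y → |K x y| ≤ CK / vnorm (x - y) ^ N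
  smooth : ∀ x x' y : Fin N → ℝ, x ≠ y → vnorm (x - x') ≤ vnorm (x - y) / 2 →
    |K x y - K x' y| + |K y x - K y x'| ≤
      ω (vnorm (x - x') / vnorm (x - y)) / vnorm (x - y) ^ N
  omega_zero : ω 0 = 0
  omega_mono : MonotoneOn ω (Set.Ici 0)
  omega_subadd : ∀ s t : ℝ, 0 ≤ s → 0 ≤ t → ω (s + t) ≤ ω s + ω t

/-- The Dini condition `∫₀¹ ω(t) dt/t < ∞` for a modulus of continuity. -/
def Dini (ω : ℝ → ℝ) : Prop :=
  IntegrableOn (fun t => ω t / t) (Set.Ioc (0:ℝ) 1) volume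

/-- Componentwise (i.e. `T ⊗ I_d`) action of a scalar operator on vector-valued functions. -/
def vecApply (T : ((Fin N → ℝ) → ℝ) → ((Fin N → ℝ) → ℝ))
    (f : (Fin N → ℝ) → Fin d → ℝ) : (Fin N → ℝ) → Fin d → ℝ :=
  fun x i => T (fun y => f y i) x

/-- `T` maps `L²` to `L²` with operator norm at most `M`. -/
def L2OpNormLe (T : ((Fin N → ℝ) → ℝ) → ((Fin N → ℝ) → ℝ)) (M : ℝ) : Prop :=
  ∀ f : (Fin N → ℝ) → ℝ, MemLp f 2 volume →
    MemLp (T f) 2 volume ∧ eLpNorm (T f) 2 volume ≤ ENNReal.ofReal M * eLpNorm f 2 volume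

/-- `T` is bounded on `L²`. -/
def L2Bounded (T : ((Fin N → ℝ) → ℝ) → ((Fin N → ℝ) → ℝ)) : Prop :=
  ∃ M : ℝ, L2OpNormLe T M

/-- The family of kernels of a (generalized big) Haar shift of complexity `r`:
`K_Q` is supported on `Q × Q`, bounded by `|Q|⁻¹`, constant on products of
`(r+1)`-st generation dyadic subcubes of `Q`, and vanishes for non-dyadic `Q`. -/
structure HaarShiftKernel (N : ℕ) (r : ℕ) where
  K : Cube N → (Fin N → ℝ) → (Fin N → ℝ) → ℝ
  measK : ∀ Q : Cube N, Measurable (Function.uncurry (K Q))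
  suppK : ∀ Q : Cube N, ∀ x y, K Q x y ≠ 0 → x ∈ Q.set ∧ y ∈ Q.set
  bddK : ∀ Q : Cube N, ∀ x y, |K Q x y| ≤ (Cube.vol Q)⁻¹
  constK : ∀ Q : Cube N, ∀ m m' : Fin N → ℕ,
    (∀ i, m i < 2 ^ (r + 1)) → (∀ i, m' i < 2 ^ (r + 1)) →
    ∀ x x' y y', x ∈ (Q.subCube (r + 1) m).set → x' ∈ (Q.subCube (r + 1) m).set →
      y ∈ (Q.subCube (r + 1) m').set → y' ∈ (Q.subCube (r + 1) m').set →
      K Q x y = K Q x' y'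
  dyadicK : ∀ Q : Cube N, ¬Q.IsDyadic → K Q = 0

/-- The operator `𝕊 = Σ_{Q ∈ D} T_Q` associated to a family of Haar shift kernels. -/
def hsApply {r : ℕ} (S : HaarShiftKernel N r) (f : (Fin N → ℝ) → ℝ) : (Fin N → ℝ) → ℝ :=
  fun x => ∑' Q : Cube N, ∫ y, S.K Q x y * f y

/-- The cancellation conditions `T_Q 1_Q = 0`, `T_Q^* 1_Q = 0` making a generalized
big Haar shift a big Haar shift. -/
def IsBigShift {r : ℕ} (S : HaarShiftKernel N r) : Prop :=
  (∀ Q : Cube N, ∀ x, (∫ y, S.K Q x y) = 0) ∧ (∀ Q : Cube N, ∀ y, (∫ x, S.K Q x y) = 0)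

/-- The sublattice `D̃ = ∪_j D_{k+(r+1)j}` of the dyadic lattice. -/
def Dtilde (N r k : ℕ) : Set (Cube N) :=
  {Q | Q.IsDyadic ∧ ∃ j : ℤ, Q.side = (2:ℝ) ^ (-((k : ℤ) + (r + 1) * j))}

/-- The Haar shift is `r`-separated with lattice parameter `k`:
`T_Q ≠ 0` only for `Q ∈ D̃`. -/
def SeparatedKernel {r : ℕ} (S : HaarShiftKernel N r) (k : ℕ) : Prop :=
  ∀ Q : Cube N, S.K Q ≠ 0 → Q ∈ Dtilde N r k

/-- The martingale difference `Δ_R b = Σ_{R' child of R} ⟨b⟩_{R'} 1_{R'} - ⟨b⟩_R 1_R`. -/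
def haarDelta (R : Cube N) (b : (Fin N → ℝ) → ℝ) (x : Fin N → ℝ) : ℝ :=
  (∑ m : Fin N → Fin 2, Set.indicator (R.subCube 1 fun i => (m i : ℕ)).set
      (fun _ => avg (R.subCube 1 fun i => (m i : ℕ)) b) x)
    - Set.indicator R.set (fun _ => avg R b) x

/-- The paraproduct of order `r` with symbol `b`:
`Π_b^r f = Σ_{Q ∈ D} ⟨f⟩_Q Σ_{R ∈ ch^r Q} Δ_R b`. -/
def paraApply (r : ℕ) (b f : (Fin N → ℝ) → ℝ) : (Fin N → ℝ) → ℝ :=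
  fun x => ∑' Q : dyadicCubes N,
    avg Q.val f * ∑ m : Fin N → Fin (2 ^ r), haarDelta (Q.val.subCube r fun i => (m i : ℕ)) b x

/-- The paraproduct `Π_b^r` is `r`-separated with lattice parameter `k`. -/
def SeparatedPara (r : ℕ) (b : (Fin N → ℝ) → ℝ) (k : ℕ) : Prop :=
  ∀ Q : Cube N, Q.IsDyadic →
    (∃ x, (∑ m : Fin N → Fin (2 ^ r), haarDelta (Q.subCube r fun i => (m i : ℕ)) b x) ≠ 0) →
    Q ∈ Dtilde N r k

/-- `T` is a big Haar shift of complexity `r`, or a paraproduct of order `r`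
with `L²` norm at most `2^{-Nr/2}`. -/
def IsShiftOrParaproduct (N r : ℕ) (T : ((Fin N → ℝ) → ℝ) → ((Fin N → ℝ) → ℝ)) : Prop :=
  (∃ S : HaarShiftKernel N r, IsBigShift S ∧ L2Bounded (hsApply S) ∧ T = hsApply S) ∨
  (∃ b : (Fin N → ℝ) → ℝ, LocallyIntegrable b volume ∧
      L2OpNormLe (paraApply r b) (Real.sqrt ((2:ℝ) ^ (N * r)))⁻¹ ∧ T = paraApply r b)

/-- `T` is an `r`-separated big Haar shift of complexity `r`, or an `r`-separated
paraproduct of order `r` with `L²` norm at most `2^{-Nr/2}`; `k ≤ r` is the lattice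
parameter of the separation sublattice `D̃`. -/
def IsSeparatedShiftOrParaproduct (N r k : ℕ)
    (T : ((Fin N → ℝ) → ℝ) → ((Fin N → ℝ) → ℝ)) : Prop :=
  k ≤ r ∧
  ((∃ S : HaarShiftKernel N r, IsBigShift S ∧ L2Bounded (hsApply S) ∧
      SeparatedKernel S k ∧ T = hsApply S) ∨
   (∃ b : (Fin N → ℝ) → ℝ, LocallyIntegrable b volume ∧
      L2OpNormLe (paraApply r b) (Real.sqrt ((2:ℝ) ^ (N * r)))⁻¹ ∧
      SeparatedPara r b k ∧ T = paraApply r b))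

/-- The convex-body average `⟨⟨f⟩⟩_Q = {⟨φ f⟩_Q : ‖φ‖_∞ ≤ 1}`. -/
def cbAvg (Q : Cube N) (f : (Fin N → ℝ) → Fin d → ℝ) : Set (Fin d → ℝ) :=
  {v | ∃ φ : (Fin N → ℝ) → ℝ, Measurable φ ∧ (∀ x, |φ x| ≤ 1) ∧
        v = fun i => avg Q fun x => φ x * f x i}

/-- A weakly `η`-sparse family of cubes: there are pairwise disjoint measurable
subsets `E_Q ⊆ Q` with `|E_Q| ≥ η |Q|`. -/
def WeaklySparse (S : Set (Cube N)) (η : ℝ) : Prop :=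
  ∃ E : Cube N → Set (Fin N → ℝ),
    (∀ Q ∈ S, E Q ⊆ Q.set ∧ MeasurableSet (E Q) ∧ ENNReal.ofReal (η * Q.vol) ≤ volume (E Q)) ∧
    S.PairwiseDisjoint E

/-- The value at `x` of the convex-body sparse operator
`𝐋_S f = Σ_{Q ∈ S} ⟨⟨f⟩⟩_Q 1_Q` (an infinite Minkowski sum): all convergent sums
`Σ_Q g(Q)` with `g(Q) ∈ ⟨⟨f⟩⟩_Q` whenever `Q ∈ S` contains `x`, and `g(Q) = 0` otherwise. -/
def sparseBody (S : Set (Cube N)) (f : (Fin N → ℝ) → Fin d → ℝ) (x : Fin N → ℝ) :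
    Set (Fin d → ℝ) :=
  {v | ∃ g : Cube N → Fin d → ℝ,
        (∀ Q : Cube N, Q ∈ S ∧ x ∈ Q.set → g Q ∈ cbAvg Q f) ∧
        (∀ Q : Cube N, ¬(Q ∈ S ∧ x ∈ Q.set) → g Q = 0) ∧ HasSum g v}

/-- The `S`-children of `Q`: maximal cubes of `S` strictly contained in `Q`. -/
def sChildren (S : Set (Cube N)) (Q : Cube N) : Set (Cube N) :=
  {R | R ∈ S ∧ R.set ⊂ Q.set ∧ ¬∃ R' ∈ S, R.set ⊂ R'.set ∧ R'.set ⊂ Q.set}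

/-- A classical `ε`-sparse family of dyadic cubes: `Σ_{R ∈ ch_S(Q)} |R| ≤ ε |Q|`. -/
def EpsSparse (S : Set (Cube N)) (ε : ℝ) : Prop :=
  (∀ Q ∈ S, Q.IsDyadic) ∧
  ∀ Q ∈ S, ∀ F : Finset (Cube N), ↑F ⊆ sChildren S Q → ∑ R ∈ F, R.vol ≤ ε * Q.vol

/-- A dyadic `λ`-Carleson family: `Σ_{R ∈ S, R ⊆ Q} |R| ≤ λ |Q|` for all `Q ∈ S`. -/
def DyadicCarleson (S : Set (Cube N)) (lam : ℝ) : Prop :=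
  (∀ Q ∈ S, Q.IsDyadic) ∧
  ∀ Q ∈ S, ∀ F : Finset (Cube N), (↑F ⊆ {R | R ∈ S ∧ R.set ⊆ Q.set}) →
    ∑ R ∈ F, R.vol ≤ lam * Q.vol

/-- A simple sparse family: every cube of `S` has at most one `S`-child. -/
def SimpleSparse (S : Set (Cube N)) : Prop :=
  (∀ Q ∈ S, Q.IsDyadic) ∧ ∀ Q ∈ S, (sChildren S Q).Subsingleton

end CBD

end

/-!
Minimize the defect `∫_Q |∫_Q K(x, y) f(y) dy - g(x)|² dx` over the kernels with `|K| ≤ |Q|⁻¹`,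
a bounded closed convex subset of `L²(Q × Q)`. The defect is convex, and lower semicontinuous by
dominated convergence along a.e. convergent subsequences, so it attains its minimum: in place of
weak compactness, the minimal-norm points of its nested sublevel sets form a Cauchy sequence by
the parallelogram law. At a minimizer with residual `u(x)`, the kernel `-|Q|⁻¹ sign ⟨u(x), f(y)⟩`
minimizes `⟨u(x), ·⟩` over `⟨⟨f⟩⟩_Q ∋ g(x)`; moving towards it lowers the defect at first order
by twice the defect, which therefore vanishes.
-/

open Filter Topology
open scoped RealInnerProductSpace

section Hilbert

variable {E : Type*} [NormedAddCommGroup E] [InnerProductSpace ℝ E]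

theorem Convex.norm_sub_sq_le_of_isMinOn_norm {C : Set E} (hC : Convex ℝ C) {x y : E}
    (hx : x ∈ C) (hmin : IsMinOn (‖·‖) C x) (hy : y ∈ C) :
    ‖x - y‖ ^ 2 ≤ 2 * (‖y‖ ^ 2 - ‖x‖ ^ 2) := by
  have hmid : ‖x‖ ≤ ‖(1 / 2 : ℝ) • (x + y)‖ := by
    refine hmin ?_
    simpa only [smul_add] using hC hx hy (by norm_num) (by norm_num) (by norm_num)
  have hsum : ‖x + y‖ = 2 * ‖(1 / 2 : ℝ) • (x + y)‖ := by
    rw [norm_smul, ← mul_assoc]; norm_num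
  nlinarith [parallelogram_law_with_norm ℝ x y, norm_nonneg x]

variable [CompleteSpace E]

theorem exists_isMinOn_norm_of_convex {C : Set E} (hC : Convex ℝ C) (hcl : IsClosed C)
    (hne : C.Nonempty) : ∃ x ∈ C, IsMinOn (‖·‖) C x := by
  obtain ⟨x, hx, hxinf⟩ := exists_norm_eq_iInf_of_complete_convex hne hcl.isComplete hC 0
  refine ⟨x, hx, fun w hw => ?_⟩
  have hbdd : BddBelow (range fun w : C => ‖0 - (w : E)‖) :=
    ⟨0, by rintro _ ⟨_, rfl⟩; positivity⟩
  have := hxinf ▸ ciInf_le hbdd ⟨w, hw⟩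
  simpa using this

theorem nonempty_iInter_of_antitone_convex {C : ℕ → Set E} (hanti : Antitone C)
    (hconv : ∀ n, Convex ℝ (C n)) (hcl : ∀ n, IsClosed (C n)) (hne : ∀ n, (C n).Nonempty)
    (hbdd : Bornology.IsBounded (C 0)) : (⋂ n, C n).Nonempty := by
  choose x hxC hxmin using fun n => exists_isMinOn_norm_of_convex (hconv n) (hcl n) (hne n)
  obtain ⟨R, hR⟩ := isBounded_iff_forall_norm_le.mp hbdd
  set a : ℕ → ℝ := fun n => ‖x n‖ ^ 2
  have ha_mono : Monotone a := fun m n hmn =>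
    pow_le_pow_left₀ (norm_nonneg _) (hxmin m (hanti hmn (hxC n))) 2
  have ha_bdd : BddAbove (range a) :=
    ⟨R ^ 2, by
      rintro _ ⟨n, rfl⟩
      exact pow_le_pow_left₀ (norm_nonneg _) (hR _ (hanti (Nat.zero_le n) (hxC n))) 2⟩
  set L := ⨆ n, a n
  have hdist : ∀ N n, N ≤ n → dist (x N) (x n) ≤ √(2 * (L - a N)) := by
    intro N n hNn
    rw [dist_eq_norm, ← Real.sqrt_sq (norm_nonneg _)]
    refine Real.sqrt_le_sqrt ?_
    have := (hconv N).norm_sub_sq_le_of_isMinOn_norm (hxC N) (hxmin N) (hanti hNn (hxC n))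
    linarith [le_ciSup ha_bdd n]
  have hcauchy : CauchySeq x := by
    refine cauchySeq_of_le_tendsto_0 (fun N => 2 * √(2 * (L - a N))) (fun n m N hn hm => ?_) ?_
    · calc dist (x n) (x m) ≤ dist (x N) (x n) + dist (x N) (x m) := dist_triangle_left _ _ _
        _ ≤ _ := by linarith [hdist N n hn, hdist N m hm]
    · have : Tendsto a atTop (𝓝 L) := tendsto_atTop_ciSup ha_mono ha_bdd
      have := ((this.const_sub L).const_mul 2).sqrt.const_mul 2
      simpa using this
  obtain ⟨y, hy⟩ := cauchySeq_tendsto_of_complete hcauchy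
  exact ⟨y, mem_iInter.2 fun n => (hcl n).mem_of_tendsto hy
    (eventually_atTop.2 ⟨n, fun k hk => hanti hk (hxC k)⟩)⟩

theorem ConvexOn.exists_isMinOn_of_isBounded {B : Set E} {V : E → ℝ} (hV : ConvexOn ℝ B V)
    (hB : Bornology.IsBounded B) (hne : B.Nonempty) (hVbdd : BddBelow (V '' B))
    (hVcl : ∀ c, IsClosed {x ∈ B | V x ≤ c}) : ∃ x ∈ B, IsMinOn V B x := by
  set m := sInf (V '' B)
  set C : ℕ → Set E := fun n => {x ∈ B | V x ≤ m + 1 / ((n : ℝ) + 1)}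
  have hCne : ∀ n, (C n).Nonempty := fun n => by
    obtain ⟨_, ⟨x, hx, rfl⟩, hlt⟩ := exists_lt_of_csInf_lt (hne.image V)
      (lt_add_of_pos_right m (Nat.one_div_pos_of_nat (n := n)))
    exact ⟨x, hx, hlt.le⟩
  have hanti : Antitone C := fun k n hkn x hx =>
    ⟨hx.1, hx.2.trans (by gcongr)⟩
  obtain ⟨x, hx⟩ := nonempty_iInter_of_antitone_convex hanti (fun n => hV.convex_le _)
    (fun n => hVcl _) hCne (hB.subset fun _ h => h.1)
  have hxC : ∀ n, x ∈ C n := mem_iInter.1 hx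
  refine ⟨x, (hxC 0).1, fun y hy => ?_⟩
  have hxm : V x ≤ m := le_of_tendsto_of_tendsto' tendsto_const_nhds
    (by simpa using (tendsto_one_div_add_atTop_nhds_zero_nat (𝕜 := ℝ)).const_add m)
    fun n => (hxC n).2
  exact hxm.trans (csInf_le hVbdd ⟨y, hy, rfl⟩)

end Hilbert

noncomputable section

namespace CBD

theorem measurable_signType_cast : Measurable fun t : ℝ => (SignType.sign t : ℝ) := by
  refine Monotone.measurable fun s t hst => ?_
  simp only [sign_apply]
  split_ifs <;> norm_num <;> linarith

theorem abs_signType_cast_le_one (t : ℝ) : |(SignType.sign t : ℝ)| ≤ 1 := by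
  rcases lt_trichotomy t 0 with h | h | h <;> simp [h]

theorem abs_add_le_of_abs_le {a c x y b : ℝ} (ha : 0 ≤ a) (hc : 0 ≤ c) (hac : a + c = 1)
    (hx : |x| ≤ b) (hy : |y| ≤ b) : |a * x + c * y| ≤ b := by
  rw [abs_le] at *
  constructor <;> nlinarith

theorem norm_smul_add_smul_sq_le {E : Type*} [SeminormedAddCommGroup E] [NormedSpace ℝ E]
    {a c : ℝ} (ha : 0 ≤ a) (hc : 0 ≤ c) (hac : a + c = 1) (u v : E) :
    ‖a • u + c • v‖ ^ 2 ≤ a * ‖u‖ ^ 2 + c * ‖v‖ ^ 2 := by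
  have h : ‖a • u + c • v‖ ≤ a * ‖u‖ + c * ‖v‖ := by
    refine (norm_add_le _ _).trans_eq ?_
    rw [norm_smul, norm_smul, Real.norm_of_nonneg ha, Real.norm_of_nonneg hc]
  calc ‖a • u + c • v‖ ^ 2 ≤ (a * ‖u‖ + c * ‖v‖) ^ 2 := by gcongr
    _ ≤ a * ‖u‖ ^ 2 + c * ‖v‖ ^ 2 := by nlinarith [sq_nonneg (‖u‖ - ‖v‖), mul_nonneg ha hc]

theorem norm_one_sub_smul_add_smul_sq_le {E : Type*} [NormedAddCommGroup E]
    [InnerProductSpace ℝ E] {u v : E} (huv : ⟪u, v⟫ ≤ 0) {t : ℝ} (ht₀ : 0 ≤ t) (ht₁ : t ≤ 1) :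
    ‖(1 - t) • u + t • v‖ ^ 2 ≤ (1 - t) ^ 2 * ‖u‖ ^ 2 + t ^ 2 * ‖v‖ ^ 2 := by
  rw [norm_add_sq_real, norm_smul, norm_smul, real_inner_smul_left, real_inner_smul_right,
    Real.norm_of_nonneg (by linarith : 0 ≤ 1 - t), Real.norm_of_nonneg ht₀]
  nlinarith [mul_nonneg (mul_nonneg (by linarith : 0 ≤ 1 - t) ht₀) (neg_nonneg.2 huv)]

theorem nonpos_of_forall_le_one_sub_sq_mul {D D' : ℝ}
    (h : ∀ t ∈ Ioc (0 : ℝ) 1, D ≤ (1 - t) ^ 2 * D + t ^ 2 * D') : D ≤ 0 := by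
  have hlin : ∀ t ∈ Ioc (0 : ℝ) 1, 2 * D ≤ t * (D + D') := fun t ht => by
    have := h t ht
    exact le_of_mul_le_mul_left (by nlinarith) ht.1
  have hlim := (tendsto_one_div_add_atTop_nhds_zero_nat (𝕜 := ℝ)).mul_const (D + D')
  rw [zero_mul] at hlim
  have h2D : 2 * D ≤ 0 := ge_of_tendsto' hlim fun n => hlin _ ⟨Nat.one_div_pos_of_nat,
    (div_le_one (by positivity)).2 (by linarith [(n.cast_nonneg : (0 : ℝ) ≤ n)])⟩
  linarith

def signKernel {α E : Type*} [Inner ℝ E] (b : ℝ) (u F : α → E) (z : α × α) : ℝ :=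
  -b * SignType.sign ⟪u z.1, F z.2⟫

theorem abs_signKernel_le {α E : Type*} [Inner ℝ E] {b : ℝ} {u F : α → E} (z : α × α) :
    |signKernel b u F z| ≤ |b| := by
  rw [signKernel, abs_mul, abs_neg]
  exact mul_le_of_le_one_right (abs_nonneg b) (abs_signType_cast_le_one _)

section KernelDefect

variable {α : Type*} [MeasurableSpace α] {μ : Measure α}
  {E : Type*} [NormedAddCommGroup E] [InnerProductSpace ℝ E]

def kernelApply (μ : Measure α) (F : α → E) (k : α × α → ℝ) (x : α) : E :=
  ∫ y, k (x, y) • F y ∂μ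

def kernelDefect (μ : Measure α) (F G : α → E) (k : α × α → ℝ) : ℝ :=
  ∫ x, ‖kernelApply μ F k x - G x‖ ^ 2 ∂μ

/-- For `b = |Q|⁻¹` and `μ` Lebesgue measure restricted to `Q`, this is `⟨⟨F⟩⟩_Q`. -/
def boundedIntegrals (μ : Measure α) (F : α → E) (b : ℝ) : Set E :=
  {v | ∃ ψ : α → ℝ, Measurable ψ ∧ (∀ y, |ψ y| ≤ b) ∧ v = ∫ y, ψ y • F y ∂μ}

variable {F G : α → E} {b : ℝ}

theorem norm_integral_smul_le (hF : Integrable F μ) {ψ : α → ℝ} (hψ : ∀ᵐ y ∂μ, |ψ y| ≤ b) :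
    ‖∫ y, ψ y • F y ∂μ‖ ≤ b * ∫ y, ‖F y‖ ∂μ := by
  rw [← integral_const_mul]
  refine norm_integral_le_of_norm_le (hF.norm.const_mul b) ?_
  filter_upwards [hψ] with y hy
  rw [norm_smul, Real.norm_eq_abs]
  exact mul_le_mul_of_nonneg_right hy (norm_nonneg _)

theorem norm_le_of_mem_boundedIntegrals (hF : Integrable F μ) {v : E}
    (hv : v ∈ boundedIntegrals μ F b) : ‖v‖ ≤ b * ∫ y, ‖F y‖ ∂μ := by
  obtain ⟨ψ, -, hψ, rfl⟩ := hv
  exact norm_integral_smul_le hF (Eventually.of_forall hψ)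

theorem inner_kernelApply_signKernel_le [CompleteSpace E] (hF : Integrable F μ) (u : α → E)
    (x : α) {v : E} (hv : v ∈ boundedIntegrals μ F b) :
    ⟪u x, kernelApply μ F (signKernel b u F) x⟫ ≤ ⟪u x, v⟫ := by
  obtain ⟨ψ, hψm, hψ, rfl⟩ := hv
  have hψi : Integrable (fun y => ψ y • F y) μ :=
    hF.bdd_smul b hψm.aestronglyMeasurable (Eventually.of_forall hψ)
  have hsi : Integrable (fun y => signKernel b u F (x, y) • F y) μ :=
    hF.bdd_smul |b| ((measurable_signType_cast.comp_aemeasurable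
      (hF.1.const_inner (c := u x)).aemeasurable).aestronglyMeasurable.const_mul _)
      (Eventually.of_forall fun y => abs_signKernel_le (x, y))
  rw [kernelApply, ← integral_inner hsi, ← integral_inner hψi]
  refine integral_mono (hsi.const_inner _) (hψi.const_inner _) fun y => ?_
  simp only [signKernel, real_inner_smul_right, mul_assoc, sign_mul_self]
  calc -b * |⟪u x, F y⟫| ≤ -|ψ y * ⟪u x, F y⟫| := by
        rw [abs_mul, neg_mul, neg_le_neg_iff]
        exact mul_le_mul_of_nonneg_right (hψ y) (abs_nonneg _)
    _ ≤ ψ y * ⟪u x, F y⟫ := neg_abs_le _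

theorem aestronglyMeasurable_signKernel {u : α → E} (hu : AEStronglyMeasurable u μ)
    (hF : AEStronglyMeasurable F μ) : AEStronglyMeasurable (signKernel b u F) (μ.prod μ) :=
  ((measurable_signType_cast.comp_aemeasurable
    ((hu.comp_quasiMeasurePreserving Measure.quasiMeasurePreserving_fst).inner
      (hF.comp_quasiMeasurePreserving Measure.quasiMeasurePreserving_snd)).aemeasurable).const_mul
    (-b)).aestronglyMeasurable

variable [IsFiniteMeasure μ] {k k₁ k₂ : α × α → ℝ}

theorem aestronglyMeasurable_kernelApply (hF : AEStronglyMeasurable F μ)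
    (hk : AEStronglyMeasurable k (μ.prod μ)) : AEStronglyMeasurable (kernelApply μ F k) μ :=
  (hk.smul (hF.comp_quasiMeasurePreserving Measure.quasiMeasurePreserving_snd)).integral_prod_right'

theorem ae_integrable_kernel_smul (hF : Integrable F μ) (hk : AEStronglyMeasurable k (μ.prod μ))
    (hkb : ∀ᵐ z ∂μ.prod μ, |k z| ≤ b) : ∀ᵐ x ∂μ, Integrable (fun y => k (x, y) • F y) μ := by
  filter_upwards [hk.prodMk_left, Measure.ae_ae_of_ae_prod hkb] with x hxm hxb
  exact hF.bdd_smul b hxm hxb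

theorem kernelApply_congr_ae (h : k₁ =ᵐ[μ.prod μ] k₂) :
    kernelApply μ F k₁ =ᵐ[μ] kernelApply μ F k₂ := by
  filter_upwards [Measure.ae_ae_of_ae_prod h] with x hx
  exact integral_congr_ae (hx.mono fun y hy => by simp only [hy])

theorem kernelDefect_congr_ae (h : k₁ =ᵐ[μ.prod μ] k₂) :
    kernelDefect μ F G k₁ = kernelDefect μ F G k₂ :=
  integral_congr_ae ((kernelApply_congr_ae (F := F) h).mono fun x hx => by simp only [hx])

theorem ae_kernelApply_convexComb_sub (hF : Integrable F μ)
    (hk₁ : AEStronglyMeasurable k₁ (μ.prod μ)) (hk₁b : ∀ᵐ z ∂μ.prod μ, |k₁ z| ≤ b)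
    (hk₂ : AEStronglyMeasurable k₂ (μ.prod μ)) (hk₂b : ∀ᵐ z ∂μ.prod μ, |k₂ z| ≤ b)
    {a c : ℝ} (hac : a + c = 1) :
    ∀ᵐ x ∂μ, kernelApply μ F (fun z => a * k₁ z + c * k₂ z) x - G x =
      a • (kernelApply μ F k₁ x - G x) + c • (kernelApply μ F k₂ x - G x) := by
  filter_upwards [ae_integrable_kernel_smul hF hk₁ hk₁b, ae_integrable_kernel_smul hF hk₂ hk₂b]
    with x h₁ h₂
  simp only [kernelApply, add_smul, mul_smul]
  rw [integral_add (f := fun y => a • k₁ (x, y) • F y) (g := fun y => c • k₂ (x, y) • F y)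
    (h₁.smul a) (h₂.smul c), integral_smul, integral_smul]
  rw [smul_sub, smul_sub, sub_add_sub_comm, ← add_smul _ _ (G x), hac, one_smul]

theorem ae_norm_sq_kernelApply_sub_le (hF : Integrable F μ) (hkb : ∀ᵐ z ∂μ.prod μ, |k z| ≤ b)
    (hG : ∀ᵐ x ∂μ, G x ∈ boundedIntegrals μ F b) :
    ∀ᵐ x ∂μ, ‖‖kernelApply μ F k x - G x‖ ^ 2‖ ≤ (2 * (b * ∫ y, ‖F y‖ ∂μ)) ^ 2 := by
  filter_upwards [Measure.ae_ae_of_ae_prod hkb, hG] with x hx hGx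
  have hkx : ‖kernelApply μ F k x‖ ≤ b * ∫ y, ‖F y‖ ∂μ := norm_integral_smul_le hF hx
  rw [Real.norm_of_nonneg (by positivity)]
  refine pow_le_pow_left₀ (norm_nonneg _) ((norm_sub_le _ _).trans ?_) 2
  linarith [norm_le_of_mem_boundedIntegrals hF hGx]

variable (hF : Integrable F μ) (hGm : AEStronglyMeasurable G μ)
  (hG : ∀ᵐ x ∂μ, G x ∈ boundedIntegrals μ F b)
include hF hGm hG

theorem integrable_norm_kernelApply_sub_sq (hk : AEStronglyMeasurable k (μ.prod μ))
    (hkb : ∀ᵐ z ∂μ.prod μ, |k z| ≤ b) :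
    Integrable (fun x => ‖kernelApply μ F k x - G x‖ ^ 2) μ :=
  .of_bound (((aestronglyMeasurable_kernelApply hF.1 hk).sub hGm).norm.pow 2) _
    (ae_norm_sq_kernelApply_sub_le hF hkb hG)

theorem kernelDefect_convexComb_le (hk₁ : AEStronglyMeasurable k₁ (μ.prod μ))
    (hk₁b : ∀ᵐ z ∂μ.prod μ, |k₁ z| ≤ b) (hk₂ : AEStronglyMeasurable k₂ (μ.prod μ))
    (hk₂b : ∀ᵐ z ∂μ.prod μ, |k₂ z| ≤ b) {a c : ℝ} (ha : 0 ≤ a) (hc : 0 ≤ c) (hac : a + c = 1) :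
    kernelDefect μ F G (fun z => a * k₁ z + c * k₂ z) ≤
      a * kernelDefect μ F G k₁ + c * kernelDefect μ F G k₂ := by
  have i₁ := (integrable_norm_kernelApply_sub_sq hF hGm hG hk₁ hk₁b).const_mul a
  have i₂ := (integrable_norm_kernelApply_sub_sq hF hGm hG hk₂ hk₂b).const_mul c
  rw [kernelDefect, kernelDefect, kernelDefect, ← integral_const_mul, ← integral_const_mul,
    ← integral_add i₁ i₂]
  refine integral_mono_of_nonneg (Eventually.of_forall fun x => by positivity) (i₁.add i₂) ?_
  filter_upwards [ae_kernelApply_convexComb_sub (G := G) hF hk₁ hk₁b hk₂ hk₂b hac] with x hx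
  rw [hx]
  exact norm_smul_add_smul_sq_le ha hc hac _ _

theorem tendsto_kernelDefect {k : ℕ → α × α → ℝ} {k' : α × α → ℝ}
    (hk : ∀ n, AEStronglyMeasurable (k n) (μ.prod μ)) (hkb : ∀ n, ∀ᵐ z ∂μ.prod μ, |k n z| ≤ b)
    (hlim : ∀ᵐ z ∂μ.prod μ, Tendsto (fun n => k n z) atTop (𝓝 (k' z))) :
    Tendsto (fun n => kernelDefect μ F G (k n)) atTop (𝓝 (kernelDefect μ F G k')) := by
  have hpt : ∀ᵐ x ∂μ,
      Tendsto (fun n => kernelApply μ F (k n) x) atTop (𝓝 (kernelApply μ F k' x)) := by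
    filter_upwards [ae_all_iff.2 fun n => (hk n).prodMk_left,
      ae_all_iff.2 fun n => Measure.ae_ae_of_ae_prod (hkb n), Measure.ae_ae_of_ae_prod hlim]
      with x hxm hxb hxl
    refine tendsto_integral_of_dominated_convergence (fun y => b * ‖F y‖)
      (fun n => (hxm n).smul hF.1) (hF.norm.const_mul b) (fun n => ?_)
      (hxl.mono fun y hy => hy.smul_const (F y))
    filter_upwards [hxb n] with y hy
    rw [norm_smul, Real.norm_eq_abs]
    exact mul_le_mul_of_nonneg_right hy (norm_nonneg _)
  refine tendsto_integral_of_dominated_convergence _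
    (fun n => (integrable_norm_kernelApply_sub_sq hF hGm hG (hk n) (hkb n)).1)
    (integrable_const _) (fun n => ae_norm_sq_kernelApply_sub_le hF (hkb n) hG) ?_
  filter_upwards [hpt] with x hx
  exact (hx.sub_const (G x)).norm.pow 2

theorem isClosed_setOf_kernelDefect_le (c : ℝ) :
    IsClosed {K : Lp ℝ 2 (μ.prod μ) | (∀ᵐ z ∂μ.prod μ, |K z| ≤ b) ∧ kernelDefect μ F G K ≤ c} := by
  refine IsSeqClosed.isClosed fun K K' hK hlim => ?_
  have hmeas : TendstoInMeasure (μ.prod μ) (fun n => ⇑(K n)) atTop K' :=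
    tendstoInMeasure_of_tendsto_eLpNorm two_ne_zero (fun n => Lp.aestronglyMeasurable _)
      (Lp.aestronglyMeasurable _) ((Lp.tendsto_Lp_iff_tendsto_eLpNorm' K K').1 hlim)
  obtain ⟨ns, -, hns⟩ := hmeas.exists_seq_tendsto_ae
  have hb : ∀ n, ∀ᵐ z ∂μ.prod μ, |K (ns n) z| ≤ b := fun n => (hK (ns n)).1
  refine ⟨?_, ?_⟩
  · filter_upwards [hns, ae_all_iff.2 hb] with z hz hzb
    exact le_of_tendsto' hz.abs hzb
  · exact le_of_tendsto'
      (tendsto_kernelDefect hF hGm hG (fun n => Lp.aestronglyMeasurable _) hb hns)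
      fun n => (hK (ns n)).2

variable [CompleteSpace E]

theorem kernelDefect_eq_zero_of_forall_le (hb : 0 ≤ b) {k₀ : α × α → ℝ}
    (hk₀ : AEStronglyMeasurable k₀ (μ.prod μ)) (hk₀b : ∀ᵐ z ∂μ.prod μ, |k₀ z| ≤ b)
    (hmin : ∀ k, AEStronglyMeasurable k (μ.prod μ) → (∀ᵐ z ∂μ.prod μ, |k z| ≤ b) →
      kernelDefect μ F G k₀ ≤ kernelDefect μ F G k) :
    kernelDefect μ F G k₀ = 0 := by
  set u := fun x => kernelApply μ F k₀ x - G x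
  set kh := signKernel b u F
  have hkh : AEStronglyMeasurable kh (μ.prod μ) :=
    aestronglyMeasurable_signKernel ((aestronglyMeasurable_kernelApply hF.1 hk₀).sub hGm) hF.1
  have hkhb : ∀ᵐ z ∂μ.prod μ, |kh z| ≤ b :=
    Eventually.of_forall fun z => (abs_signKernel_le z).trans_eq (abs_of_nonneg hb)
  have hinner : ∀ᵐ x ∂μ, ⟪u x, kernelApply μ F kh x - G x⟫ ≤ 0 := by
    filter_upwards [hG] with x hx
    rw [inner_sub_right, sub_nonpos]
    exact inner_kernelApply_signKernel_le hF u x hx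
  have i₀ := integrable_norm_kernelApply_sub_sq hF hGm hG hk₀ hk₀b
  have ih := integrable_norm_kernelApply_sub_sq hF hGm hG hkh hkhb
  refine le_antisymm
    (nonpos_of_forall_le_one_sub_sq_mul (D' := kernelDefect μ F G kh) fun t ⟨ht₀, ht₁⟩ => ?_)
    (integral_nonneg fun x => by positivity)
  calc kernelDefect μ F G k₀ ≤ kernelDefect μ F G (fun z => (1 - t) * k₀ z + t * kh z) :=
        hmin _ ((hk₀.const_mul _).add (hkh.const_mul _)) (by
          filter_upwards [hk₀b, hkhb] with z h₀ h
          exact abs_add_le_of_abs_le (by linarith) ht₀.le (by ring) h₀ h)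
    _ ≤ ∫ x, ((1 - t) ^ 2 * ‖u x‖ ^ 2 + t ^ 2 * ‖kernelApply μ F kh x - G x‖ ^ 2) ∂μ := by
        refine integral_mono_of_nonneg (Eventually.of_forall fun x => by positivity)
          ((i₀.const_mul _).add (ih.const_mul _)) ?_
        filter_upwards [ae_kernelApply_convexComb_sub (G := G) hF hk₀ hk₀b hkh hkhb
          (a := 1 - t) (c := t) (by ring), hinner] with x hx hxi
        rw [hx]
        exact norm_one_sub_smul_add_smul_sq_le hxi ht₀.le ht₁
    _ = (1 - t) ^ 2 * kernelDefect μ F G k₀ + t ^ 2 * kernelDefect μ F G kh := by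
        rw [integral_add (i₀.const_mul _) (ih.const_mul _), integral_const_mul,
          integral_const_mul]
        rfl

theorem exists_Lp_kernelDefect_eq_zero (hb : 0 ≤ b) :
    ∃ K : Lp ℝ 2 (μ.prod μ), (∀ᵐ z ∂μ.prod μ, |K z| ≤ b) ∧ kernelDefect μ F G K = 0 := by
  let B : Set (Lp ℝ 2 (μ.prod μ)) := {K | ∀ᵐ z ∂μ.prod μ, |K z| ≤ b}
  have hcomb : ∀ (K₁ K₂ : Lp ℝ 2 (μ.prod μ)) (a c : ℝ),
      ⇑(a • K₁ + c • K₂) =ᵐ[μ.prod μ] fun z => a * K₁ z + c * K₂ z := fun K₁ K₂ a c => by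
    filter_upwards [Lp.coeFn_add (a • K₁) (c • K₂), Lp.coeFn_smul a K₁, Lp.coeFn_smul c K₂]
      with z h₁ h₂ h₃
    rw [h₁, Pi.add_apply, h₂, h₃]
    rfl
  have hconv : ConvexOn ℝ B fun K => kernelDefect μ F G K := by
    refine ⟨fun K₁ hK₁ K₂ hK₂ a c ha hc hac => ?_, fun K₁ hK₁ K₂ hK₂ a c ha hc hac => ?_⟩
    · change ∀ᵐ z ∂μ.prod μ, |(a • K₁ + c • K₂ : Lp ℝ 2 (μ.prod μ)) z| ≤ b
      filter_upwards [hcomb K₁ K₂ a c, hK₁, hK₂] with z hz h₁ h₂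
      rw [hz]
      exact abs_add_le_of_abs_le ha hc hac h₁ h₂
    · change kernelDefect μ F G (a • K₁ + c • K₂ : Lp ℝ 2 (μ.prod μ)) ≤ a * _ + c * _
      rw [kernelDefect_congr_ae (hcomb K₁ K₂ a c)]
      exact kernelDefect_convexComb_le hF hGm hG (Lp.aestronglyMeasurable _) hK₁
        (Lp.aestronglyMeasurable _) hK₂ ha hc hac
  have hbdd : Bornology.IsBounded B := isBounded_iff_forall_norm_le.2
    ⟨_, fun K hK => Lp.norm_le_of_ae_bound hb
      (Eventually.mono hK fun z hz => (Real.norm_eq_abs _).trans_le hz)⟩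
  have h0 : (0 : Lp ℝ 2 (μ.prod μ)) ∈ B := by
    filter_upwards [Lp.coeFn_zero ℝ 2 (μ.prod μ)] with z hz
    rwa [hz, Pi.zero_apply, abs_zero]
  have hbelow : BddBelow ((fun K : Lp ℝ 2 (μ.prod μ) => kernelDefect μ F G K) '' B) :=
    ⟨0, by rintro _ ⟨K, -, rfl⟩; exact integral_nonneg fun x => by positivity⟩
  obtain ⟨K₀, hK₀, hmin⟩ := hconv.exists_isMinOn_of_isBounded hbdd ⟨0, h0⟩ hbelow
    (isClosed_setOf_kernelDefect_le hF hGm hG)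
  refine ⟨K₀, hK₀, kernelDefect_eq_zero_of_forall_le hF hGm hG hb
    (Lp.aestronglyMeasurable _) hK₀ fun k hk hkb => ?_⟩
  have hkL : MemLp k 2 (μ.prod μ) :=
    MemLp.of_bound hk b (hkb.mono fun z hz => (Real.norm_eq_abs _).trans_le hz)
  rw [← kernelDefect_congr_ae hkL.coeFn_toLp]
  refine hmin ?_
  filter_upwards [hkL.coeFn_toLp, hkb] with z h₁ h₂
  rwa [h₁]

theorem exists_measurable_kernel_integral_eq (hb : 0 ≤ b) :
    ∃ K : α → α → ℝ, Measurable (Function.uncurry K) ∧ (∀ x y, |K x y| ≤ b) ∧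
      ∀ᵐ x ∂μ, ∫ y, K x y • F y ∂μ = G x := by
  obtain ⟨K₀, hK₀b, hK₀⟩ := exists_Lp_kernelDefect_eq_zero hF hGm hG hb
  have hK₀m := Lp.aestronglyMeasurable K₀
  have hzero : ∀ᵐ x ∂μ, kernelApply μ F K₀ x = G x := by
    filter_upwards [(integral_eq_zero_iff_of_nonneg_ae (Eventually.of_forall fun x => by positivity)
      (integrable_norm_kernelApply_sub_sq hF hGm hG hK₀m hK₀b)).1 hK₀] with x hx
    simpa [sub_eq_zero] using hx
  set k := fun z => max (-b) (min b (hK₀m.mk K₀ z))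
  have hk : ⇑K₀ =ᵐ[μ.prod μ] k := by
    filter_upwards [hK₀m.ae_eq_mk, hK₀b] with z h₁ h₂
    rw [abs_le] at h₂
    simp only [k, ← h₁, min_eq_right h₂.2, max_eq_right h₂.1]
  refine ⟨fun x y => k (x, y),
    measurable_const.max (measurable_const.min hK₀m.stronglyMeasurable_mk.measurable),
    fun x y => abs_le.2 ⟨le_max_left _ _, max_le (by linarith) (min_le_left _ _)⟩, ?_⟩
  filter_upwards [hzero, kernelApply_congr_ae (F := F) hk] with x h₁ h₂
  rw [← h₁, h₂]
  rfl

end KernelDefect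

theorem Cube.volume_set_lt_top {N : ℕ} (Q : Cube N) : volume Q.set < ⊤ :=
  (measure_mono fun _ hx => ⟨fun i => (hx i).1, fun i => (hx i).2.le⟩ :
    volume Q.set ≤ volume (Icc Q.corner (Q.corner + fun _ => Q.side))).trans_lt
    isCompact_Icc.measure_lt_top

theorem integral_smul_toLp_apply {α : Type*} [MeasurableSpace α] {μ : Measure α} {d : ℕ}
    {f : α → Fin d → ℝ} {ψ : α → ℝ}
    (h : Integrable (fun y => ψ y • WithLp.toLp 2 (f y) : α → EuclideanSpace ℝ (Fin d)) μ)
    (i : Fin d) : (∫ y, ψ y • WithLp.toLp 2 (f y) ∂μ) i = ∫ y, ψ y * f y i ∂μ := by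
  have := (EuclideanSpace.proj i).integral_comp_comm h
  simp only [map_smul, PiLp.proj_apply, smul_eq_mul] at this
  exact this.symm

/-- A measurable selection of `⟨⟨f⟩⟩_Q` is given by an integral
kernel `K` on `Q × Q` with `‖K‖_∞ ≤ |Q|⁻¹`. -/
theorem cbAvg_selection_kernel
    (N d : ℕ) (Q : Cube N) (f : (Fin N → ℝ) → Fin d → ℝ)
    (hf : IntegrableOn f Q.set volume)
    (g : (Fin N → ℝ) → Fin d → ℝ) (hg : Measurable g)
    (hmem : ∀ᵐ x ∂(volume.restrict Q.set), g x ∈ cbAvg Q f) :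
    ∃ K : (Fin N → ℝ) → (Fin N → ℝ) → ℝ,
      Measurable (Function.uncurry K) ∧
      (∀ x y, |K x y| ≤ (Q.vol)⁻¹) ∧
      ∀ᵐ x ∂(volume.restrict Q.set), g x = fun i => ∫ y in Q.set, K x y * f y i := by
  have : IsFiniteMeasure (volume.restrict Q.set) :=
    isFiniteMeasure_restrict.2 Q.volume_set_lt_top.ne
  set b := (Q.vol)⁻¹
  have hb : 0 ≤ b := inv_nonneg.2 (pow_nonneg Q.side_pos.le N)
  set F : (Fin N → ℝ) → EuclideanSpace ℝ (Fin d) := fun y => WithLp.toLp 2 (f y)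
  have hF : Integrable F (volume.restrict Q.set) :=
    (EuclideanSpace.equiv (Fin d) ℝ).symm.toContinuousLinearMap.integrable_comp hf
  have hG : ∀ᵐ x ∂(volume.restrict Q.set),
      WithLp.toLp 2 (g x) ∈ boundedIntegrals (volume.restrict Q.set) F b := by
    filter_upwards [hmem] with x ⟨φ, hφm, hφ, hgx⟩
    have hψ : ∀ y, |b * φ y| ≤ b := fun y => by
      rw [abs_mul, abs_of_nonneg hb]
      exact mul_le_of_le_one_right hb (hφ y)
    refine ⟨fun y => b * φ y, hφm.const_mul b, hψ, ?_⟩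
    ext i
    rw [integral_smul_toLp_apply (hF.bdd_smul b (hφm.const_mul b).aestronglyMeasurable
      (Eventually.of_forall hψ)), hgx]
    simp only [avg, mul_assoc, integral_const_mul, b]
  obtain ⟨K, hKm, hKb, hK⟩ := exists_measurable_kernel_integral_eq hF
    ((WithLp.measurable_toLp 2 _).comp hg).aestronglyMeasurable hG hb
  refine ⟨K, hKm, hKb, ?_⟩
  filter_upwards [hK] with x hx
  funext i
  rw [← integral_smul_toLp_apply (hF.bdd_smul b hKm.of_uncurry_left.aestronglyMeasurable
    (Eventually.of_forall fun y => hKb x y)), hx]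
  rfl

end CBD

end
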